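/- arXiv:2603.13712 — 3 statements merged into one kernel-verified Lean document; each statement's English description precedes it below -/
import Mathlib

section
/- Let Λ₁, Λ₂ : M_n(ℂ) → M_n(ℂ) be linear maps such that Λ₂ = V ∘ Λ₁ for some linear map V : M_n(ℂ) → M_n(ℂ) that is positive and trace-preserving. Then for every matrix A ∈ M_n(ℂ), ‖Λ₂(A)‖₁ ≤ ‖Λ₁(A)‖₁. In particular, for any two density matrices ρ₁, ρ₂, the distinguishability change ΔD = ½‖Λ₂(ρ₂ − ρ₁)‖₁ − ½‖Λ₁(ρ₂ − ρ₁)‖₁ satisfies ΔD ≤ 0. -/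
open scoped ComplexOrder

/-- The trace norm (Schatten 1-norm) of a complex matrix: `‖A‖₁ = Tr √(Aᴴ A)`. -/
noncomputable def traceNorm {m : Type*} [Fintype m] [DecidableEq m]
    (A : Matrix m m ℂ) : ℝ :=
  (((Matrix.posSemidef_conjTranspose_mul_self A).1.eigenvectorUnitary.1 *
      Matrix.diagonal (((↑) : ℝ → ℂ) ∘ Real.sqrt ∘ (Matrix.posSemidef_conjTranspose_mul_self A).1.eigenvalues) *
      (star (Matrix.posSemidef_conjTranspose_mul_self A).1.eigenvectorUnitary : Matrix m m ℂ)).trace).re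

/-- A map between matrix algebras is positive if it sends positive semidefinite
matrices to positive semidefinite matrices. -/
def IsPositiveMap {m d : Type*} [Fintype m] [Fintype d]
    (Φ : Matrix m m ℂ → Matrix d d ℂ) : Prop :=
  ∀ X : Matrix m m ℂ, X.PosSemidef → (Φ X).PosSemidef

/-- A map between matrix algebras is trace-preserving if `Tr (Φ X) = Tr X` for all `X`. -/
def IsTracePreservingMap {m d : Type*} [Fintype m] [Fintype d]
    (Φ : Matrix m m ℂ → Matrix d d ℂ) : Prop :=
  ∀ X : Matrix m m ℂ, (Φ X).trace = X.trace

/-!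
The trace norm is dual to the operator norm: the singular value decomposition `A = U Σ V*` gives
`Re tr (A C) ≤ ‖C‖ ‖A‖₁` for every `C`, with equality `Re tr (A W) = ‖A‖₁` for the unitary
`W = V U*`. Choosing `W` for `Φ A` and moving `Φ` across the trace pairing,
`‖Φ A‖₁ = Re tr (A Φ†(W)) ≤ ‖Φ†(W)‖ ‖A‖₁`, where the dual map `Φ†` is positive and unital because
`Φ` is positive and trace-preserving. Writing `W = ∑ z • P_z` with spectral projections `P_z` and
`|z| = 1`, the matrices `Q_z = Φ†(P_z)` are positive with `∑ Q_z = 1`, and Cauchy–Schwarz gives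
`‖∑ z • Q_z‖ ≤ 1` (Russo–Dye for unitaries).
-/

open scoped InnerProductSpace MatrixOrder Matrix.Norms.L2Operator

section SpectralProjection

variable {A : Type*} [CStarAlgebra A]

noncomputable def spectralProjection (a : A) (z : ℂ) : A :=
  cfc (fun w : ℂ => if w = z then (1 : ℂ) else 0) a

-- On a finite spectrum every function is continuous, so none of the `cfc` terms is a junk value.
lemma cfc_eq_sum_smul_spectralProjection (a : A) [IsStarNormal a]
    (hfin : (spectrum ℂ a).Finite) (f : ℂ → ℂ) :
    cfc f a = ∑ z ∈ hfin.toFinset, f z • spectralProjection a z := by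
  simp only [spectralProjection]
  rw [← Finset.sum_congr rfl fun z _ => cfc_smul (f z) _ a (hfin.continuousOn _),
    ← cfc_sum _ a _ fun z _ => hfin.continuousOn _]
  refine cfc_congr fun w hw => ?_
  simp [hfin.mem_toFinset.mpr hw]

lemma spectralProjection_nonneg [PartialOrder A] [StarOrderedRing A] (a : A) (z : ℂ) :
    0 ≤ spectralProjection a z :=
  cfc_nonneg fun w _ => by split_ifs <;> simp

end SpectralProjection

lemma ContinuousLinearMap.norm_sum_smul_star_mul_self_le_one {E : Type*} [NormedAddCommGroup E]
    [InnerProductSpace ℂ E] [CompleteSpace E] {ι : Type*} (s : Finset ι) (c : ι → ℂ)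
    (B : ι → E →L[ℂ] E) (hc : ∀ l ∈ s, ‖c l‖ ≤ 1) (hB : ∑ l ∈ s, star (B l) * B l = 1) :
    ‖∑ l ∈ s, c l • (star (B l) * B l)‖ ≤ 1 := by
  have hinner (l : ι) (v w : E) : ⟪(star (B l) * B l) v, w⟫_ℂ = ⟪B l v, B l w⟫_ℂ := by
    rw [mul_apply_eq_comp, star_eq_adjoint, adjoint_inner_left]
  have hsum_sq (v : E) (hv : ‖v‖ = 1) : ∑ l ∈ s, ‖B l v‖ ^ 2 = 1 := by
    have := congrArg (fun T : E →L[ℂ] E => RCLike.re ⟪T v, v⟫_ℂ) hB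
    simp only [sum_apply, sum_inner, hinner, map_sum, inner_self_eq_norm_sq] at this
    simpa [hv] using this
  refine opNorm_le_of_re_inner_le zero_le_one fun x y hx hy => ?_
  calc RCLike.re ⟪(∑ l ∈ s, c l • (star (B l) * B l)) x, y⟫_ℂ
      ≤ ‖∑ l ∈ s, (starRingEnd ℂ) (c l) * ⟪B l x, B l y⟫_ℂ‖ := by
        simp only [sum_apply, smul_apply, sum_inner, inner_smul_left, hinner]
        exact RCLike.re_le_norm _
    _ ≤ ∑ l ∈ s, ‖B l x‖ * ‖B l y‖ := by
        refine (norm_sum_le _ _).trans (Finset.sum_le_sum fun l hl => ?_)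
        rw [norm_mul, RCLike.norm_conj]
        exact (mul_le_of_le_one_left (norm_nonneg _) (hc l hl)).trans (norm_inner_le_norm _ _)
    _ ≤ √(∑ l ∈ s, ‖B l x‖ ^ 2) * √(∑ l ∈ s, ‖B l y‖ ^ 2) := Real.sum_mul_le_sqrt_mul_sqrt _ _ _
    _ = 1 := by rw [hsum_sq x hx, hsum_sq y hy, Real.sqrt_one, one_mul]

namespace Matrix

section Square

variable {n : Type*} [Fintype n] [DecidableEq n]

lemma posSemidef_of_forall_dotProduct_mulVec_nonneg {M : Matrix n n ℂ}
    (h : ∀ x, 0 ≤ star x ⬝ᵥ (M *ᵥ x)) : M.PosSemidef := by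
  rw [← isPositive_toEuclideanLin_iff, LinearMap.isPositive_iff_complex]
  intro x
  have hx := Complex.nonneg_iff.mp (h x.ofLp)
  have hreal : star (star x.ofLp ⬝ᵥ (M *ᵥ x.ofLp)) = star x.ofLp ⬝ᵥ (M *ᵥ x.ofLp) :=
    Complex.conj_eq_iff_im.mpr hx.2.symm
  rw [EuclideanSpace.inner_eq_star_dotProduct, ofLp_toLpLin, toLin'_apply, dotProduct_comm,
    star_dotProduct, hreal]
  exact ⟨Complex.ext rfl hx.2, hx.1⟩

lemma PosSemidef.trace_mul_nonneg {P Q : Matrix n n ℂ} (hP : P.PosSemidef) (hQ : Q.PosSemidef) :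
    0 ≤ (P * Q).trace := by
  obtain ⟨B, rfl⟩ := CStarAlgebra.nonneg_iff_eq_star_mul_self.mp hQ.nonneg
  rw [← Matrix.mul_assoc, trace_mul_comm, ← Matrix.mul_assoc, star_eq_conjTranspose]
  exact (hP.mul_mul_conjTranspose_same B).trace_nonneg

lemma norm_apply_le_l2_opNorm (M : Matrix n n ℂ) (i j : n) : ‖M i j‖ ≤ ‖M‖ := by
  have hcol : M i j = toEuclideanCLM (n := n) (𝕜 := ℂ) M (EuclideanSpace.single j 1) i := by
    simp
  calc ‖M i j‖ ≤ ‖toEuclideanCLM (n := n) (𝕜 := ℂ) M (EuclideanSpace.single j 1)‖ :=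
        hcol ▸ PiLp.norm_apply_le _ i
    _ ≤ ‖M‖ * ‖EuclideanSpace.single j (1 : ℂ)‖ := (toEuclideanCLM (n := n) (𝕜 := ℂ) M).le_opNorm _
    _ = ‖M‖ := by simp

lemma IsHermitian.toEuclideanCLM_eigenvectorBasis {H : Matrix n n ℂ} (hH : H.IsHermitian)
    (j : n) : toEuclideanCLM (n := n) (𝕜 := ℂ) H (hH.eigenvectorBasis j) =
      (hH.eigenvalues j : ℂ) • hH.eigenvectorBasis j := by
  ext1
  rw [ofLp_toEuclideanCLM, hH.mulVec_eigenvectorBasis, RCLike.real_smul_eq_coe_smul (K := ℂ)]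
  rfl

noncomputable def singularValues (A : Matrix n n ℂ) : n → ℝ :=
  fun i => √((posSemidef_conjTranspose_mul_self A).1.eigenvalues i)

lemma singularValues_nonneg (A : Matrix n n ℂ) (i : n) : 0 ≤ singularValues A i :=
  Real.sqrt_nonneg _

lemma traceNorm_eq_sum_singularValues (A : Matrix n n ℂ) :
    traceNorm A = ∑ i, singularValues A i := by
  rw [traceNorm, trace_mul_cycle, Unitary.coe_star_mul_self, one_mul, trace_diagonal,
    Complex.re_sum]
  simp [singularValues]

lemma traceNorm_nonneg (A : Matrix n n ℂ) : 0 ≤ traceNorm A := by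
  rw [traceNorm_eq_sum_singularValues]
  exact Finset.sum_nonneg fun i _ => singularValues_nonneg A i

lemma inner_toEuclideanCLM_eigenvectorBasis (A : Matrix n n ℂ) (i j : n) :
    ⟪toEuclideanCLM (n := n) (𝕜 := ℂ) A
        ((posSemidef_conjTranspose_mul_self A).1.eigenvectorBasis i),
      toEuclideanCLM (n := n) (𝕜 := ℂ) A
        ((posSemidef_conjTranspose_mul_self A).1.eigenvectorBasis j)⟫_ℂ =
      if i = j then (singularValues A i : ℂ) ^ 2 else 0 := by
  set hH := (posSemidef_conjTranspose_mul_self A).1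
  rw [← ContinuousLinearMap.adjoint_inner_right, ← ContinuousLinearMap.star_eq_adjoint,
    ← mul_apply_eq_comp, ← map_star, ← map_mul, star_eq_conjTranspose,
    hH.toEuclideanCLM_eigenvectorBasis, inner_smul_right,
    orthonormal_iff_ite.mp hH.eigenvectorBasis.orthonormal, ← Complex.ofReal_pow, singularValues,
    Real.sq_sqrt ((posSemidef_conjTranspose_mul_self A).eigenvalues_nonneg i)]
  split_ifs with h <;> simp [h]

theorem exists_svd (A : Matrix n n ℂ) :
    ∃ U ∈ unitaryGroup n ℂ, ∃ V ∈ unitaryGroup n ℂ,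
      A = U * diagonal (fun i => (singularValues A i : ℂ)) * star V := by
  set hH := (posSemidef_conjTranspose_mul_self A).1
  set σ := singularValues A
  set T := toEuclideanCLM (n := n) (𝕜 := ℂ) A
  have hinner (i j : n) : ⟪T (hH.eigenvectorBasis i), T (hH.eigenvectorBasis j)⟫_ℂ =
      if i = j then (σ i : ℂ) ^ 2 else 0 :=
    inner_toEuclideanCLM_eigenvectorBasis A i j
  set w := fun i => ((σ i : ℂ)⁻¹) • T (hH.eigenvectorBasis i)
  have horth : Orthonormal ℂ ({i | σ i ≠ 0}.domRestrict w) := by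
    rw [orthonormal_iff_ite]
    rintro ⟨i, hi⟩ ⟨j, hj⟩
    simp only [Set.domRestrict_apply, w, inner_smul_left, inner_smul_right, hinner,
      Subtype.mk.injEq]
    split_ifs with h
    · subst h
      have : (σ i : ℂ) ≠ 0 := by exact_mod_cast hi
      simp only [map_inv₀, Complex.conj_ofReal]
      field_simp
    · simp
  obtain ⟨b, hb⟩ := horth.exists_orthonormalBasis_extension_of_card_eq (by simp)
  have hcol (i : n) : T (hH.eigenvectorBasis i) = (σ i : ℂ) • b i := by
    by_cases hi : σ i = 0
    · rw [hi, Complex.ofReal_zero, zero_smul, ← inner_self_eq_zero (𝕜 := ℂ), hinner, if_pos rfl,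
        hi, Complex.ofReal_zero, zero_pow two_ne_zero]
    · rw [hb i hi, smul_smul, mul_inv_cancel₀ (by exact_mod_cast hi), one_smul]
  refine ⟨(EuclideanSpace.basisFun n ℂ).toBasis.toMatrix b,
    (EuclideanSpace.basisFun n ℂ).toMatrix_orthonormalBasis_mem_unitary b,
    hH.eigenvectorUnitary, hH.eigenvectorUnitary.2, ?_⟩
  have hAV : A * hH.eigenvectorUnitary = (EuclideanSpace.basisFun n ℂ).toBasis.toMatrix b *
      diagonal (fun i => (σ i : ℂ)) := by
    ext a i
    rw [mul_diagonal]
    simpa [T, Module.Basis.toMatrix_apply, mul_apply, mulVec, dotProduct, mul_comm]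
      using congrArg (· a) (hcol i)
  rw [← hAV, mul_assoc, Unitary.mul_star_self_of_mem hH.eigenvectorUnitary.2, mul_one]

lemma re_trace_mul_le_norm_mul_traceNorm (A C : Matrix n n ℂ) :
    (A * C).trace.re ≤ ‖C‖ * traceNorm A := by
  obtain ⟨U, hU, V, hV, hA⟩ := exists_svd A
  set σ := singularValues A
  set M := star V * (C * U)
  have htrace : (A * C).trace = ∑ i, (σ i : ℂ) * M i i := by
    rw [hA, Matrix.mul_assoc, Matrix.mul_assoc, trace_mul_comm, Matrix.mul_assoc]
    simp [trace, diagonal_mul, M, Matrix.mul_assoc]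
  have hM : ‖M‖ = ‖C‖ := by
    rw [CStarRing.norm_mem_unitary_mul _ (Unitary.star_mem hV),
      CStarRing.norm_mul_mem_unitary _ hU]
  rw [htrace, Complex.re_sum, traceNorm_eq_sum_singularValues, Finset.mul_sum]
  refine Finset.sum_le_sum fun i _ => ?_
  calc ((σ i : ℂ) * M i i).re ≤ ‖(σ i : ℂ) * M i i‖ := Complex.re_le_norm _
    _ = σ i * ‖M i i‖ := by rw [norm_mul, Complex.norm_of_nonneg (singularValues_nonneg A i)]
    _ ≤ σ i * ‖M‖ := by gcongr; exacts [singularValues_nonneg A i, norm_apply_le_l2_opNorm M i i]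
    _ = ‖C‖ * σ i := by rw [hM, mul_comm]

lemma exists_unitary_re_trace_mul_eq_traceNorm (A : Matrix n n ℂ) :
    ∃ W ∈ unitaryGroup n ℂ, (A * W).trace.re = traceNorm A := by
  obtain ⟨U, hU, V, hV, hA⟩ := exists_svd A
  rw [traceNorm_eq_sum_singularValues]
  set σ := singularValues A
  refine ⟨V * star U, Submonoid.mul_mem _ hV (Unitary.star_mem hU), ?_⟩
  rw [hA, show U * diagonal (fun i => (σ i : ℂ)) * star V * (V * star U)
      = U * (diagonal (fun i => (σ i : ℂ)) * ((star V * V) * star U)) by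
      simp only [Matrix.mul_assoc], Unitary.star_mul_self_of_mem hV, Matrix.one_mul,
    trace_mul_comm, Matrix.mul_assoc, Unitary.star_mul_self_of_mem hU, Matrix.mul_one,
    trace_diagonal, Complex.re_sum]
  simp

end Square

variable {m d : Type*} [Fintype m] [DecidableEq m] [Fintype d] [DecidableEq d]

noncomputable def traceDual (Φ : Matrix m m ℂ →ₗ[ℂ] Matrix d d ℂ) :
    Matrix d d ℂ →ₗ[ℂ] Matrix m m ℂ where
  toFun Y := Matrix.of fun i j => (Φ (single j i 1) * Y).trace
  map_add' _ _ := by ext; simp [Matrix.mul_add]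
  map_smul' _ _ := by ext; simp

lemma trace_map_mul_eq_trace_mul_traceDual (Φ : Matrix m m ℂ →ₗ[ℂ] Matrix d d ℂ)
    (X : Matrix m m ℂ) (Y : Matrix d d ℂ) : (Φ X * Y).trace = (X * traceDual Φ Y).trace := by
  induction X using Matrix.induction_on' with
  | h_zero => simp
  | h_add X X' hX hX' => simp [Matrix.add_mul, hX, hX']
  | h_std_basis i j c =>
    rw [show single i j c = c • single i j 1 by rw [smul_single, smul_eq_mul, mul_one], map_smul,
      smul_mul_assoc, smul_mul_assoc, trace_smul, trace_smul, trace_single_mul]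
    simp [traceDual]

lemma traceDual_one {Φ : Matrix m m ℂ →ₗ[ℂ] Matrix d d ℂ} (hΦ : IsTracePreservingMap Φ) :
    traceDual Φ 1 = 1 := by
  ext i j
  simp only [traceDual, LinearMap.coe_mk, AddHom.coe_mk, of_apply, Matrix.mul_one, one_apply]
  rw [hΦ]
  split_ifs with h
  · subst h; exact trace_single_eq_same _ _
  · exact trace_single_eq_of_ne _ _ _ (Ne.symm h)

lemma posSemidef_traceDual {Φ : Matrix m m ℂ →ₗ[ℂ] Matrix d d ℂ} (hΦ : IsPositiveMap Φ)
    {Y : Matrix d d ℂ} (hY : Y.PosSemidef) : (traceDual Φ Y).PosSemidef := by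
  refine posSemidef_of_forall_dotProduct_mulVec_nonneg fun x => ?_
  have hx : star x ⬝ᵥ (traceDual Φ Y *ᵥ x) = (vecMulVec x (star x) * traceDual Φ Y).trace := by
    rw [vecMulVec_mul, trace_vecMulVec, dotProduct_mulVec, dotProduct_comm]
  rw [hx, ← trace_map_mul_eq_trace_mul_traceDual]
  exact (hΦ _ (posSemidef_vecMulVec_self_star x)).trace_mul_nonneg hY

theorem norm_map_le_one_of_mem_unitary {Ψ : Matrix m m ℂ →ₗ[ℂ] Matrix d d ℂ}
    (hpos : IsPositiveMap Ψ) (hunital : Ψ 1 = 1) {U : Matrix m m ℂ}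
    (hU : U ∈ unitary (Matrix m m ℂ)) : ‖Ψ U‖ ≤ 1 := by
  have := isStarNormal_of_mem_unitary hU
  have hfin := U.finite_spectrum
  have hU_eq : U = ∑ z ∈ hfin.toFinset, z • spectralProjection U z :=
    (cfc_id ℂ U).symm.trans (cfc_eq_sum_smul_spectralProjection U hfin id)
  have hone : 1 = ∑ z ∈ hfin.toFinset, spectralProjection U z := by
    rw [← cfc_one ℂ U, cfc_eq_sum_smul_spectralProjection U hfin 1]
    simp only [Pi.one_apply, one_smul]
  choose B hB using fun z => CStarAlgebra.nonneg_iff_eq_star_mul_self.mp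
    (hpos _ (nonneg_iff_posSemidef.mp (spectralProjection_nonneg U z))).nonneg
  have hB_sum : ∑ z ∈ hfin.toFinset, star (B z) * B z = 1 := by
    rw [← hunital, hone, map_sum]
    exact Finset.sum_congr rfl fun z _ => (hB z).symm
  rw [cstar_norm_def, hU_eq, map_sum, map_sum]
  simp only [map_smul, hB, map_mul, map_star]
  refine ContinuousLinearMap.norm_sum_smul_star_mul_self_le_one _ _ _ (fun z hz => ?_) ?_
  · exact (mem_sphere_zero_iff_norm.mp
      (spectrum.subset_circle_of_unitary hU (hfin.mem_toFinset.mp hz))).le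
  · simpa only [map_sum, map_mul, map_star, map_one] using
      congrArg (toEuclideanCLM (n := d) (𝕜 := ℂ)) hB_sum

theorem traceNorm_map_le {Φ : Matrix m m ℂ →ₗ[ℂ] Matrix d d ℂ} (hpos : IsPositiveMap Φ)
    (htp : IsTracePreservingMap Φ) (A : Matrix m m ℂ) : traceNorm (Φ A) ≤ traceNorm A := by
  obtain ⟨W, hW, hΦAW⟩ := exists_unitary_re_trace_mul_eq_traceNorm (Φ A)
  have hdual : ‖traceDual Φ W‖ ≤ 1 :=
    norm_map_le_one_of_mem_unitary (fun Y hY => posSemidef_traceDual hpos hY) (traceDual_one htp) hW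
  calc traceNorm (Φ A) = (A * traceDual Φ W).trace.re := by
        rw [← hΦAW, trace_map_mul_eq_trace_mul_traceDual]
    _ ≤ ‖traceDual Φ W‖ * traceNorm A := re_trace_mul_le_norm_mul_traceNorm _ _
    _ ≤ traceNorm A := mul_le_of_le_one_left (traceNorm_nonneg A) hdual

end Matrix

theorem traceNorm_antitone_of_pDivisible_general
    {n : ℕ} (Λ₁ Λ₂ V : Matrix (Fin n) (Fin n) ℂ → Matrix (Fin n) (Fin n) ℂ)
    (hV : IsLinearMap ℂ V)
    (hVpos : IsPositiveMap V) (hVtp : IsTracePreservingMap V)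
    (hcomp : Λ₂ = V ∘ Λ₁) :
    (∀ A : Matrix (Fin n) (Fin n) ℂ, traceNorm (Λ₂ A) ≤ traceNorm (Λ₁ A)) ∧
    (∀ ρ₁ ρ₂ : Matrix (Fin n) (Fin n) ℂ,
      ρ₁.PosSemidef → ρ₁.trace = 1 → ρ₂.PosSemidef → ρ₂.trace = 1 →
      (1 / 2 : ℝ) * traceNorm (Λ₂ (ρ₂ - ρ₁)) - (1 / 2 : ℝ) * traceNorm (Λ₁ (ρ₂ - ρ₁)) ≤ 0) := by
  have hcontract (A : Matrix (Fin n) (Fin n) ℂ) : traceNorm (Λ₂ A) ≤ traceNorm (Λ₁ A) := by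
    rw [hcomp]
    exact Matrix.traceNorm_map_le (Φ := IsLinearMap.mk' V hV) hVpos hVtp (Λ₁ A)
  exact ⟨hcontract, fun ρ₁ ρ₂ _ _ _ _ => by linarith [hcontract (ρ₂ - ρ₁)]⟩

/-- if `Λ₂ = V ∘ Λ₁` for some positive trace-preserving linear map `V`,
then `‖Λ₂(A)‖₁ ≤ ‖Λ₁(A)‖₁` for every matrix `A`; in particular, for any two density
matrices `ρ₁, ρ₂`, the distinguishability change
`ΔD = ½‖Λ₂(ρ₂ − ρ₁)‖₁ − ½‖Λ₁(ρ₂ − ρ₁)‖₁` is nonpositive. -/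
theorem traceNorm_antitone_of_pDivisible
    {n : ℕ} (Λ₁ Λ₂ V : Matrix (Fin n) (Fin n) ℂ → Matrix (Fin n) (Fin n) ℂ)
    (hΛ₁ : IsLinearMap ℂ Λ₁) (hΛ₂ : IsLinearMap ℂ Λ₂) (hV : IsLinearMap ℂ V)
    (hVpos : IsPositiveMap V) (hVtp : IsTracePreservingMap V)
    (hcomp : Λ₂ = V ∘ Λ₁) :
    (∀ A : Matrix (Fin n) (Fin n) ℂ, traceNorm (Λ₂ A) ≤ traceNorm (Λ₁ A)) ∧
    (∀ ρ₁ ρ₂ : Matrix (Fin n) (Fin n) ℂ,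
      ρ₁.PosSemidef → ρ₁.trace = 1 → ρ₂.PosSemidef → ρ₂.trace = 1 →
      (1 / 2 : ℝ) * traceNorm (Λ₂ (ρ₂ - ρ₁)) - (1 / 2 : ℝ) * traceNorm (Λ₁ (ρ₂ - ρ₁)) ≤ 0) :=
  traceNorm_antitone_of_pDivisible_general Λ₁ Λ₂ V hV hVpos hVtp hcomp
end

section
/- Let P₊ and P₋ be orthogonal projectors in M_m(ℂ) with P₊ P₋ = 0, and set P₀ = I − P₊ − P₋. Let E be a Hermitian matrix with 0 ≤ E ≤ I, Tr(E P₊) = Tr(P₊), and Tr(E P₋) = 0. Then E = P₊ + E₀ for some Hermitian E₀ with 0 ≤ E₀ ≤ P₀; in particular E acts as the identity on the range of P₊ and vanishes on the range of P₋. -/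
/-! A positive semidefinite `A` with `tr (A P) = 0` for an orthogonal projector `P` satisfies
`A P = 0`, since `P A P ≥ 0` has zero trace. Applied to `E` and `P₋`, and to `1 - E` and `P₊`,
this gives `E P₋ = 0` and `E P₊ = P₊`. Compressing `E` by `1 - P₊` then shows `E - P₊ ≥ 0`,
and compressing `1 - E` by `1 - P₋` shows `P₀ - (E - P₊) = 1 - E - P₋ ≥ 0`. -/

open scoped ComplexOrder MatrixOrder
open Matrix

namespace Matrix.PosSemidef

variable {𝕜 n : Type*} [RCLike 𝕜] [Fintype n] {A : Matrix n n 𝕜}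

/-- Writing `A = Bᴴ B`, the hypothesis says `(B P)ᴴ (B P) = 0`, hence `B P = 0`. -/
theorem mul_eq_zero_of_conjTranspose_mul_mul_eq_zero (hA : A.PosSemidef) {P : Matrix n n 𝕜}
    (h : Pᴴ * A * P = 0) : A * P = 0 := by
  classical
  obtain ⟨B, rfl⟩ := CStarAlgebra.nonneg_iff_eq_star_mul_self.mp hA.nonneg
  have hBP : (B * P)ᴴ * (B * P) = 0 := by
    rw [conjTranspose_mul, ← h, star_eq_conjTranspose]
    noncomm_ring
  rw [star_eq_conjTranspose, Matrix.mul_assoc, conjTranspose_mul_self_eq_zero.mp hBP,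
    Matrix.mul_zero]

theorem mul_eq_zero_of_trace_mul_eq_zero (hA : A.PosSemidef) {P : Matrix n n 𝕜}
    (hP : P.IsHermitian) (hPP : IsIdempotentElem P) (h : (A * P).trace = 0) : A * P = 0 := by
  refine hA.mul_eq_zero_of_conjTranspose_mul_mul_eq_zero ?_
  refine ((hA.conjTranspose_mul_mul_same P).trace_eq_zero_iff).mp ?_
  rw [hP.eq, trace_mul_cycle, hPP.eq, trace_mul_comm, h]

variable [DecidableEq n]

theorem sub_of_mul_eq_self (hA : A.PosSemidef) {P : Matrix n n 𝕜} (hP : P.IsHermitian)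
    (hPP : IsIdempotentElem P) (h : A * P = P) : (A - P).PosSemidef := by
  have hPA : P * A = P := by
    simpa only [conjTranspose_mul, hA.isHermitian.eq, hP.eq] using congrArg (·ᴴ) h
  have hcompress : (1 - P) * A * (1 - P)ᴴ = A - P := by
    rw [conjTranspose_sub, conjTranspose_one, hP.eq]
    simp only [Matrix.sub_mul, Matrix.mul_sub, Matrix.mul_one, Matrix.one_mul, hPA, h, hPP.eq]
    abel
  exact hcompress ▸ hA.mul_mul_conjTranspose_same _

end Matrix.PosSemidef

theorem povm_element_decomposition_general
    {m : ℕ} (Pp Pm : Matrix (Fin m) (Fin m) ℂ)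
    (hPpHerm : Pp.IsHermitian) (hPpIdem : Pp * Pp = Pp)
    (hPmHerm : Pm.IsHermitian) (hPmIdem : Pm * Pm = Pm)
    (P0 : Matrix (Fin m) (Fin m) ℂ) (hP0 : P0 = 1 - Pp - Pm)
    (E : Matrix (Fin m) (Fin m) ℂ)
    (hEpos : E.PosSemidef) (hEle : ((1 : Matrix (Fin m) (Fin m) ℂ) - E).PosSemidef)
    (hTrp : (E * Pp).trace = Pp.trace) (hTrm : (E * Pm).trace = 0) :
    (∃ E₀ : Matrix (Fin m) (Fin m) ℂ, E₀.IsHermitian ∧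
      E₀.PosSemidef ∧ (P0 - E₀).PosSemidef ∧ E = Pp + E₀) ∧
    E * Pp = Pp ∧ E * Pm = 0 := by
  have hEPm : E * Pm = 0 := hEpos.mul_eq_zero_of_trace_mul_eq_zero hPmHerm hPmIdem hTrm
  have hEPp : E * Pp = Pp := by
    have hTr : ((1 - E) * Pp).trace = 0 := by
      rw [Matrix.sub_mul, Matrix.one_mul, trace_sub, hTrp, sub_self]
    have := hEle.mul_eq_zero_of_trace_mul_eq_zero hPpHerm hPpIdem hTr
    rwa [Matrix.sub_mul, Matrix.one_mul, sub_eq_zero, eq_comm] at this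
  have hE₀ : (E - Pp).PosSemidef := hEpos.sub_of_mul_eq_self hPpHerm hPpIdem hEPp
  have hP0E₀ : (P0 - (E - Pp)).PosSemidef := by
    have hFPm : (1 - E) * Pm = Pm := by rw [Matrix.sub_mul, Matrix.one_mul, hEPm, sub_zero]
    have hP0E : P0 - (E - Pp) = 1 - E - Pm := by rw [hP0]; abel
    exact hP0E ▸ hEle.sub_of_mul_eq_self hPmHerm hPmIdem hFPm
  exact ⟨⟨E - Pp, hE₀.isHermitian, hE₀, hP0E₀, by abel⟩, hEPp, hEPm⟩

/-- let `P₊, P₋` be orthogonal projectors with `P₊ P₋ = 0` and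
`P₀ = I − P₊ − P₋`. If `E` is Hermitian with `0 ≤ E ≤ I`, `Tr(E P₊) = Tr(P₊)` and
`Tr(E P₋) = 0`, then `E = P₊ + E₀` for some Hermitian `E₀` with `0 ≤ E₀ ≤ P₀`;
in particular `E` acts as the identity on the range of `P₊` and vanishes on the range
of `P₋`. -/
theorem povm_element_decomposition
    {m : ℕ} (Pp Pm : Matrix (Fin m) (Fin m) ℂ)
    (hPpHerm : Pp.IsHermitian) (hPpIdem : Pp * Pp = Pp)
    (hPmHerm : Pm.IsHermitian) (hPmIdem : Pm * Pm = Pm)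
    (horth : Pp * Pm = 0)
    (P0 : Matrix (Fin m) (Fin m) ℂ) (hP0 : P0 = 1 - Pp - Pm)
    (E : Matrix (Fin m) (Fin m) ℂ) (hEHerm : E.IsHermitian)
    (hEpos : E.PosSemidef) (hEle : ((1 : Matrix (Fin m) (Fin m) ℂ) - E).PosSemidef)
    (hTrp : (E * Pp).trace = Pp.trace) (hTrm : (E * Pm).trace = 0) :
    (∃ E₀ : Matrix (Fin m) (Fin m) ℂ, E₀.IsHermitian ∧
      E₀.PosSemidef ∧ (P0 - E₀).PosSemidef ∧ E = Pp + E₀) ∧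
    E * Pp = Pp ∧ E * Pm = 0 :=
  povm_element_decomposition_general Pp Pm hPpHerm hPpIdem hPmHerm hPmIdem P0 hP0 E hEpos hEle hTrp
    hTrm
end

section
/- For 0 < ε < 1/4, let Λ₁ and Λ₂ be the model qubit channels, and let V be the unique linear map on M_2(ℂ) satisfying V(I) = I, V(X) = η X, V(Z) = η Z, and V(Y) = (1 − 4ε) Y, where η = (1 − 4ε + 8ε²)/(1 − 2ε). Then V ∘ Λ₁ = Λ₂, V is positive and trace-preserving, but V is not completely positive; i.e. the intermediate map of the model is weakly non-Markovian in this parameter range. -/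
open scoped ComplexOrder

/-- The Pauli `X` matrix. -/
def pauliX : Matrix (Fin 2) (Fin 2) ℂ := !![0, 1; 1, 0]

/-- The Pauli `Y` matrix. -/
def pauliY : Matrix (Fin 2) (Fin 2) ℂ := !![0, -Complex.I; Complex.I, 0]

/-- The Pauli `Z` matrix. -/
def pauliZ : Matrix (Fin 2) (Fin 2) ℂ := !![1, 0; 0, -1]

/-- The model channel `Λ₁(ρ) = (1 − 2ε)ρ + ε ZρZ + ε XρX`. -/
noncomputable def chan1 (ε : ℝ) (ρ : Matrix (Fin 2) (Fin 2) ℂ) :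
    Matrix (Fin 2) (Fin 2) ℂ :=
  ((1 - 2 * ε : ℝ) : ℂ) • ρ + ((ε : ℝ) : ℂ) • (pauliZ * ρ * pauliZ)
    + ((ε : ℝ) : ℂ) • (pauliX * ρ * pauliX)

/-- The model channel `Λ₂(ρ) = [(1 − 2ε)² + 4ε²]ρ + 2ε(1 − 2ε)(ZρZ + XρX)`. -/
noncomputable def chan2 (ε : ℝ) (ρ : Matrix (Fin 2) (Fin 2) ℂ) :
    Matrix (Fin 2) (Fin 2) ℂ :=
  (((1 - 2 * ε) ^ 2 + 4 * ε ^ 2 : ℝ) : ℂ) • ρ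
    + ((2 * ε * (1 - 2 * ε) : ℝ) : ℂ) • (pauliZ * ρ * pauliZ + pauliX * ρ * pauliX)

/-- The tensor product `Φ ⊗ id_{M_k(ℂ)}` of a map between matrix algebras with the
identity on `M_k(ℂ)`, acting blockwise. -/
def mapTensorId {m d : Type*} [Fintype m] [Fintype d] (k : ℕ)
    (Φ : Matrix m m ℂ → Matrix d d ℂ)
    (M : Matrix (m × Fin k) (m × Fin k) ℂ) : Matrix (d × Fin k) (d × Fin k) ℂ :=
  Matrix.of fun p q => Φ (Matrix.of fun i j => M (i, p.2) (j, q.2)) p.1 q.1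

/-- A map between matrix algebras is completely positive if `Φ ⊗ id_{M_k(ℂ)}` is
positive for every `k`. -/
def IsCompletelyPositive {m d : Type*} [Fintype m] [Fintype d]
    (Φ : Matrix m m ℂ → Matrix d d ℂ) : Prop :=
  ∀ (k : ℕ) (M : Matrix (m × Fin k) (m × Fin k) ℂ),
    M.PosSemidef → (mapTensorId k Φ M).PosSemidef

/-! Write `V = a • id + b • transpose + c • R` with `R ρ = (tr ρ) 1 − ρ` the reduction map.
Since `R ρ = Y ρᵀ Y` on qubits and the transpose is a positive map, `V` is positive as soon as
`a, b, c ≥ 0`, and it is trace-preserving because `a + b + c = 1`. It is not completely positive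
because its Choi matrix has the negative expectation `2 (c − b) = −8ε²/(1 − 2ε)` in the singlet
vector `e₀₁ − e₁₀`. -/

open Matrix

lemma pauliX_mul_mul_pauliX (ρ : Matrix (Fin 2) (Fin 2) ℂ) :
    pauliX * ρ * pauliX = !![ρ 1 1, ρ 1 0; ρ 0 1, ρ 0 0] := by
  rw [eta_fin_two ρ]; simp [pauliX]

lemma pauliZ_mul_mul_pauliZ (ρ : Matrix (Fin 2) (Fin 2) ℂ) :
    pauliZ * ρ * pauliZ = !![ρ 0 0, -ρ 0 1; -ρ 1 0, ρ 1 1] := by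
  rw [eta_fin_two ρ]; simp [pauliZ]

lemma pauliY_conjTranspose : pauliYᴴ = pauliY := by
  ext i j; fin_cases i <;> fin_cases j <;> simp [pauliY]

lemma pauli_decomposition (ρ : Matrix (Fin 2) (Fin 2) ℂ) :
    ρ = ((ρ 0 0 + ρ 1 1) / 2) • (1 : Matrix (Fin 2) (Fin 2) ℂ) + ((ρ 0 1 + ρ 1 0) / 2) • pauliX
      + (Complex.I * (ρ 0 1 - ρ 1 0) / 2) • pauliY + ((ρ 0 0 - ρ 1 1) / 2) • pauliZ := by
  ext i j
  fin_cases i <;> fin_cases j <;> simp [pauliX, pauliY, pauliZ] <;> ring_nf <;> simp <;> ring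

lemma IsLinearMap.eq_of_eq_on_pauli {V W : Matrix (Fin 2) (Fin 2) ℂ → Matrix (Fin 2) (Fin 2) ℂ}
    (hV : IsLinearMap ℂ V) (hW : IsLinearMap ℂ W) (h1 : V 1 = W 1) (hX : V pauliX = W pauliX)
    (hY : V pauliY = W pauliY) (hZ : V pauliZ = W pauliZ) : V = W := by
  funext ρ
  rw [pauli_decomposition ρ]
  simp only [hV.map_add, hW.map_add, hV.map_smul, hW.map_smul, h1, hX, hY, hZ]

section ReductionMap

variable {n R : Type*} [Fintype n] [DecidableEq n] [CommRing R]

def reductionMap (ρ : Matrix n n R) : Matrix n n R :=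
  ρ.trace • 1 - ρ

lemma isLinearMap_reductionMap : IsLinearMap R (reductionMap (n := n) (R := R)) where
  map_add ρ σ := by simp only [reductionMap, trace_add, add_smul]; abel
  map_smul c ρ := by simp only [reductionMap, trace_smul, smul_eq_mul, mul_smul, smul_sub]

lemma trace_reductionMap (ρ : Matrix n n R) :
    (reductionMap ρ).trace = (Fintype.card n - 1 : R) * ρ.trace := by
  simp only [reductionMap, trace_sub, trace_smul, trace_one, smul_eq_mul]
  ring

end ReductionMap

lemma reductionMap_eq_pauliY_mul_transpose_mul (ρ : Matrix (Fin 2) (Fin 2) ℂ) :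
    reductionMap ρ = pauliY * ρᵀ * pauliY := by
  ext i j
  fin_cases i <;> fin_cases j <;>
    simp [reductionMap, pauliY, trace_fin_two, mul_apply, Fin.sum_univ_two, one_apply, vecMul,
      dotProduct] <;> ring_nf <;> simp

lemma Matrix.PosSemidef.reductionMap_fin_two {ρ : Matrix (Fin 2) (Fin 2) ℂ} (hρ : ρ.PosSemidef) :
    (reductionMap ρ).PosSemidef := by
  simpa [reductionMap_eq_pauliY_mul_transpose_mul, pauliY_conjTranspose] using
    hρ.transpose.mul_mul_conjTranspose_same pauliY

/-- The coefficients are forced by the Pauli eigenvalues `1, η, 1 − 4ε, η` of `V`: identity,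
transpose and reduction map act on `(1, X, Y, Z)` with signs `(+, +, +, +)`, `(+, +, −, +)` and
`(+, −, −, −)`. -/
noncomputable def intermediateMap (ε : ℝ) (ρ : Matrix (Fin 2) (Fin 2) ℂ) :
    Matrix (Fin 2) (Fin 2) ℂ :=
  ((1 - 2 * ε : ℝ) : ℂ) • ρ + ((ε / (1 - 2 * ε) : ℝ) : ℂ) • ρᵀ
    + ((ε * (1 - 4 * ε) / (1 - 2 * ε) : ℝ) : ℂ) • reductionMap ρ

lemma isLinearMap_intermediateMap (ε : ℝ) : IsLinearMap ℂ (intermediateMap ε) where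
  map_add ρ σ := by
    simp only [intermediateMap, isLinearMap_reductionMap.map_add, transpose_add, smul_add]; abel
  map_smul c ρ := by
    simp only [intermediateMap, isLinearMap_reductionMap.map_smul, transpose_smul, smul_add,
      smul_comm c]

lemma eq_intermediateMap {ε : ℝ} (hε : 1 - 2 * ε ≠ 0)
    {V : Matrix (Fin 2) (Fin 2) ℂ → Matrix (Fin 2) (Fin 2) ℂ} (hV : IsLinearMap ℂ V)
    (h1 : V 1 = 1)
    (hX : V pauliX = (((1 - 4 * ε + 8 * ε ^ 2) / (1 - 2 * ε) : ℝ) : ℂ) • pauliX)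
    (hZ : V pauliZ = (((1 - 4 * ε + 8 * ε ^ 2) / (1 - 2 * ε) : ℝ) : ℂ) • pauliZ)
    (hY : V pauliY = ((1 - 4 * ε : ℝ) : ℂ) • pauliY) : V = intermediateMap ε := by
  have hεc : (1 - 2 * ε : ℂ) ≠ 0 := by exact_mod_cast hε
  have hεc' : (1 - ε * 2 : ℂ) ≠ 0 := by rwa [mul_comm]
  refine hV.eq_of_eq_on_pauli (isLinearMap_intermediateMap ε) ?_ ?_ ?_ ?_ <;>
    simp only [h1, hX, hY, hZ] <;> ext i j <;> fin_cases i <;> fin_cases j <;>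
    simp [intermediateMap, reductionMap, pauliX, pauliY, pauliZ, trace_fin_two] <;>
    field_simp <;> ring

lemma intermediateMap_chan1 {ε : ℝ} (hε : 1 - 2 * ε ≠ 0) (ρ : Matrix (Fin 2) (Fin 2) ℂ) :
    intermediateMap ε (chan1 ε ρ) = chan2 ε ρ := by
  have hεc : (1 - 2 * ε : ℂ) ≠ 0 := by exact_mod_cast hε
  ext i j
  fin_cases i <;> fin_cases j <;>
    simp [intermediateMap, reductionMap, chan1, chan2, pauliX_mul_mul_pauliX,
      pauliZ_mul_mul_pauliZ, trace_fin_two] <;>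
    field_simp <;> ring

lemma isTracePreservingMap_intermediateMap {ε : ℝ} (hε : 1 - 2 * ε ≠ 0) :
    IsTracePreservingMap (intermediateMap ε) := by
  intro ρ
  have hεc : (1 - 2 * ε : ℂ) ≠ 0 := by exact_mod_cast hε
  simp only [intermediateMap, trace_add, trace_smul, trace_transpose, trace_reductionMap,
    Fintype.card_fin, smul_eq_mul]
  push_cast
  field_simp
  ring

lemma isPositiveMap_intermediateMap {ε : ℝ} (h0 : 0 ≤ ε) (h1 : ε ≤ 1 / 4) :
    IsPositiveMap (intermediateMap ε) := by
  have h2 : 0 < 1 - 2 * ε := by linarith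
  intro ρ (hρ : ρ.PosSemidef)
  refine ((hρ.smul ?_).add (hρ.transpose.smul ?_)).add (hρ.reductionMap_fin_two.smul ?_) <;>
    norm_cast
  exacts [h2.le, div_nonneg h0 h2.le, div_nonneg (mul_nonneg h0 (by linarith)) h2.le]

section Choi

variable {n : ℕ} {d : Type*}

def maximallyEntangled (n : ℕ) : Fin n × Fin n → ℂ := fun p => if p.1 = p.2 then 1 else 0

def choiMatrix (Φ : Matrix (Fin n) (Fin n) ℂ → Matrix d d ℂ) :
    Matrix (d × Fin n) (d × Fin n) ℂ :=
  of fun p q => Φ (single p.2 q.2 1) p.1 q.1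

variable [Fintype d]

lemma mapTensorId_maximallyEntangled (Φ : Matrix (Fin n) (Fin n) ℂ → Matrix d d ℂ) :
    mapTensorId n Φ (vecMulVec (maximallyEntangled n) (star (maximallyEntangled n))) =
      choiMatrix Φ := by
  ext p q
  simp only [mapTensorId, choiMatrix, of_apply]
  congr 2
  ext i j
  simp only [maximallyEntangled, vecMulVec_apply, Pi.star_apply]
  split_ifs <;> simp_all

lemma IsCompletelyPositive.choiMatrix_posSemidef {Φ : Matrix (Fin n) (Fin n) ℂ → Matrix d d ℂ}
    (hΦ : IsCompletelyPositive Φ) : (choiMatrix Φ).PosSemidef :=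
  mapTensorId_maximallyEntangled Φ ▸ hΦ n _ (posSemidef_vecMulVec_self_star _)

end Choi

lemma not_isCompletelyPositive_intermediateMap {ε : ℝ} (h0 : ε ≠ 0) (h1 : 0 < 1 - 2 * ε) :
    ¬ IsCompletelyPositive (intermediateMap ε) := by
  intro hCP
  set v : Fin 2 × Fin 2 → ℂ := Pi.single (0, 1) 1 - Pi.single (1, 0) 1
  have hv := hCP.choiMatrix_posSemidef.dotProduct_mulVec_nonneg v
  have hval : star v ⬝ᵥ choiMatrix (intermediateMap ε) *ᵥ v =
      ((-8 * ε ^ 2 / (1 - 2 * ε) : ℝ) : ℂ) := by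
    simp [v, choiMatrix, intermediateMap, reductionMap, dotProduct, mulVec,
      Fintype.sum_prod_type, Fin.sum_univ_two, single_apply, trace_fin_two]
    ring
  rw [hval, Complex.zero_le_real] at hv
  have hneg : -8 * ε ^ 2 / (1 - 2 * ε) < 0 :=
    div_neg_of_neg_of_pos (by nlinarith [sq_pos_of_ne_zero h0]) h1
  linarith

/-- for `0 < ε < 1/4`, the unique linear map `V` on `M₂(ℂ)` with
`V(I) = I`, `V(X) = ηX`, `V(Z) = ηZ`, `V(Y) = (1 − 4ε)Y`, where
`η = (1 − 4ε + 8ε²)/(1 − 2ε)`, satisfies `V ∘ Λ₁ = Λ₂`, is positive and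
trace-preserving, but is not completely positive: the intermediate map of the model is
weakly non-Markovian in this parameter range. -/
theorem intermediate_map_weakly_nonMarkovian
    (ε : ℝ) (hε0 : 0 < ε) (hε : ε < 1 / 4)
    (V : Matrix (Fin 2) (Fin 2) ℂ → Matrix (Fin 2) (Fin 2) ℂ)
    (hVlin : IsLinearMap ℂ V)
    (hVI : V 1 = 1)
    (hVX : V pauliX = (((1 - 4 * ε + 8 * ε ^ 2) / (1 - 2 * ε) : ℝ) : ℂ) • pauliX)
    (hVZ : V pauliZ = (((1 - 4 * ε + 8 * ε ^ 2) / (1 - 2 * ε) : ℝ) : ℂ) • pauliZ)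
    (hVY : V pauliY = ((1 - 4 * ε : ℝ) : ℂ) • pauliY) :
    (∀ ρ : Matrix (Fin 2) (Fin 2) ℂ, V (chan1 ε ρ) = chan2 ε ρ) ∧
    IsPositiveMap V ∧
    IsTracePreservingMap V ∧
    ¬ IsCompletelyPositive V := by
  have h12 : 0 < 1 - 2 * ε := by linarith
  obtain rfl := eq_intermediateMap h12.ne' hVlin hVI hVX hVZ hVY
  exact ⟨intermediateMap_chan1 h12.ne', isPositiveMap_intermediateMap hε0.le hε.le,
    isTracePreservingMap_intermediateMap h12.ne',
    not_isCompletelyPositive_intermediateMap hε0.ne' h12⟩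
end
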